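/- Let T_{a,b} be the triangle with vertices (0,0), (1,0), (a,b), and let 0 < η ≤ 1. Then C₃(T_{a,ηb}) ≤ C₃(T_{a,b}), where C₃(T) = sup{‖u‖_{L²(T)}/|u|_{H²(T)} : u ∈ H²(T), u ≠ 0, u vanishes at the three vertices of T}. -/

import Mathlib

open MeasureTheory

noncomputable def pd1 (u : ℝ × ℝ → ℝ) (p : ℝ × ℝ) : ℝ := fderiv ℝ u p (1, 0)
noncomputable def pd2 (u : ℝ × ℝ → ℝ) (p : ℝ × ℝ) : ℝ := fderiv ℝ u p (0, 1)

/-- The constant `C₃(T)` for the triangle with vertices `p₁, p₂, p₃`: the supremum of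
`‖u‖_{L²(T)} / |u|_{H²(T)}` over nonzero `u ∈ H²(T)` vanishing at the three vertices,
where `|u|²_{H²} = ‖u_xx‖² + 2‖u_xy‖² + ‖u_yy‖²`. -/
noncomputable def C3const (p₁ p₂ p₃ : ℝ × ℝ) : ℝ :=
  sSup {r : ℝ | ∃ u : ℝ × ℝ → ℝ, ContDiff ℝ 2 u ∧
    u p₁ = 0 ∧ u p₂ = 0 ∧ u p₃ = 0 ∧
    (∫ p in convexHull ℝ {p₁, p₂, p₃}, (u p)^2) ≠ 0 ∧
    r = Real.sqrt (∫ p in convexHull ℝ {p₁, p₂, p₃}, (u p)^2) /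
        Real.sqrt (∫ p in convexHull ℝ {p₁, p₂, p₃},
          ((pd1 (pd1 u) p)^2 + 2*(pd1 (pd2 u) p)^2 + (pd2 (pd2 u) p)^2))}

/-! ### Auxiliary material -/

noncomputable def Lm (c : ℝ) : (ℝ × ℝ) →ₗ[ℝ] (ℝ × ℝ) :=
  (LinearMap.fst ℝ ℝ ℝ).prod (c • LinearMap.snd ℝ ℝ ℝ)

lemma Lm_apply (c : ℝ) (p : ℝ × ℝ) : Lm c p = (p.1, c * p.2) := rfl

lemma Lm_det (c : ℝ) : LinearMap.det (Lm c) = c := by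
  rw [← LinearMap.det_toMatrix (Module.Basis.finTwoProd ℝ)]
  have : LinearMap.toMatrix (Module.Basis.finTwoProd ℝ) (Module.Basis.finTwoProd ℝ) (Lm c) = !![1, 0; 0, c] := by
    ext i j
    fin_cases i <;> fin_cases j <;>
      simp [LinearMap.toMatrix_apply, Lm_apply]
  rw [this, Matrix.det_fin_two]
  simp

lemma map_Lm (c : ℝ) (hc : 0 < c) :
    Measure.map (fun p : ℝ × ℝ => (p.1, c * p.2)) volume
      = ENNReal.ofReal c⁻¹ • volume := by
  have h : LinearMap.det (Lm c) ≠ 0 := by rw [Lm_det]; exact ne_of_gt hc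
  have := Measure.map_linearMap_addHaar_eq_smul_addHaar (volume : Measure (ℝ × ℝ)) h
  rw [Lm_det] at this
  have hfn : ⇑(Lm c) = fun p : ℝ × ℝ => (p.1, c * p.2) := funext (Lm_apply c)
  rw [hfn] at this
  rw [this, abs_of_nonneg (inv_nonneg.2 hc.le)]

lemma hull_image (c a β : ℝ) :
    (fun p : ℝ × ℝ => (p.1, c * p.2)) '' (convexHull ℝ {((0:ℝ),(0:ℝ)), ((1:ℝ),(0:ℝ)), (a, β)})
      = convexHull ℝ {((0:ℝ),(0:ℝ)), ((1:ℝ),(0:ℝ)), (a, c*β)} := by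
  have h := (Lm c).isLinear.image_convexHull
      ({((0:ℝ),(0:ℝ)), ((1:ℝ),(0:ℝ)), (a, β)} : Set (ℝ × ℝ))
  have hfn : ⇑(Lm c) = fun p : ℝ × ℝ => (p.1, c * p.2) := funext (Lm_apply c)
  rw [hfn] at h
  rw [h]
  congr 1
  simp [Set.image_insert_eq]

lemma hull_preimage (c a β : ℝ) (hc : c ≠ 0) :
    (fun p : ℝ × ℝ => (p.1, c * p.2)) ⁻¹' (convexHull ℝ {((0:ℝ),(0:ℝ)), ((1:ℝ),(0:ℝ)), (a, c*β)})
      = convexHull ℝ {((0:ℝ),(0:ℝ)), ((1:ℝ),(0:ℝ)), (a, β)} := by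
  rw [← hull_image c a β]
  apply Set.preimage_image_eq
  intro p q h
  simp only [Prod.mk.injEq] at h
  exact Prod.ext h.1 (mul_left_cancel₀ hc h.2)

lemma hull_measurable (p₁ p₂ p₃ : ℝ × ℝ) :
    MeasurableSet (convexHull ℝ ({p₁, p₂, p₃} : Set (ℝ × ℝ))) := by
  exact ((Set.toFinite _).isCompact_convexHull ℝ).isClosed.measurableSet

lemma hull_compact (p₁ p₂ p₃ : ℝ × ℝ) :
    IsCompact (convexHull ℝ ({p₁, p₂, p₃} : Set (ℝ × ℝ))) :=
  (Set.toFinite _).isCompact_convexHull ℝ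

lemma cov (c : ℝ) (hc : 0 < c) (a β : ℝ) (f : ℝ × ℝ → ℝ) (hf : Continuous f) :
    ∫ p in convexHull ℝ {((0:ℝ),(0:ℝ)), ((1:ℝ),(0:ℝ)), (a, β)}, f (p.1, c * p.2)
      = c⁻¹ * ∫ q in convexHull ℝ {((0:ℝ),(0:ℝ)), ((1:ℝ),(0:ℝ)), (a, c*β)}, f q := by
  have hφ : Measurable (fun p : ℝ × ℝ => (p.1, c * p.2)) :=
    measurable_fst.prodMk (measurable_snd.const_mul c)
  have hs := hull_measurable ((0:ℝ),(0:ℝ)) ((1:ℝ),(0:ℝ)) (a, c*β)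
  have hmap := map_Lm c hc
  rw [← hull_preimage c a β (ne_of_gt hc),
    ← setIntegral_map hs (by rw [hmap]; exact hf.aestronglyMeasurable) hφ.aemeasurable,
    hmap, Measure.restrict_smul, integral_smul_measure,
    ENNReal.toReal_ofReal (inv_nonneg.2 hc.le), smul_eq_mul]

noncomputable def Lc (c : ℝ) : (ℝ × ℝ) →L[ℝ] (ℝ × ℝ) :=
  (ContinuousLinearMap.fst ℝ ℝ ℝ).prod (c • ContinuousLinearMap.snd ℝ ℝ ℝ)

lemma Lc_apply (c : ℝ) (p : ℝ × ℝ) : Lc c p = (p.1, c * p.2) := rfl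

lemma contDiff_pd {u : ℝ × ℝ → ℝ} (hu : ContDiff ℝ 2 u) (w : ℝ × ℝ) :
    ContDiff ℝ 1 (fun p => fderiv ℝ u p w) := by
  have h1 : ContDiff ℝ 1 (fderiv ℝ u) := hu.fderiv_right (by norm_num)
  exact (ContinuousLinearMap.apply ℝ ℝ w).contDiff.comp h1

lemma cont_pd_pd {u : ℝ × ℝ → ℝ} (hu : ContDiff ℝ 2 u) (w w' : ℝ × ℝ) :
    Continuous (fun p => fderiv ℝ (fun q => fderiv ℝ u q w) p w') :=
  ((contDiff_pd hu w).continuous_fderiv one_ne_zero).clm_apply continuous_const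

lemma cont_pd11 {u : ℝ × ℝ → ℝ} (hu : ContDiff ℝ 2 u) : Continuous (pd1 (pd1 u)) :=
  cont_pd_pd hu (1,0) (1,0)

lemma cont_pd12 {u : ℝ × ℝ → ℝ} (hu : ContDiff ℝ 2 u) : Continuous (pd1 (pd2 u)) :=
  cont_pd_pd hu (0,1) (1,0)

lemma cont_pd22 {u : ℝ × ℝ → ℝ} (hu : ContDiff ℝ 2 u) : Continuous (pd2 (pd2 u)) :=
  cont_pd_pd hu (0,1) (0,1)

lemma cont_v {u : ℝ × ℝ → ℝ} (hu : ContDiff ℝ 2 u) (c : ℝ) :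
    ContDiff ℝ 2 (fun p : ℝ × ℝ => u (p.1, c * p.2)) :=
  hu.comp (contDiff_fst.prodMk (contDiff_const.mul contDiff_snd))

lemma pd1_comp {u : ℝ × ℝ → ℝ} (hd : Differentiable ℝ u) (c : ℝ) (p : ℝ × ℝ) :
    pd1 (fun q => u (q.1, c * q.2)) p = pd1 u (p.1, c * p.2) := by
  have hφ : (fun q : ℝ × ℝ => u (q.1, c * q.2)) = u ∘ (Lc c) := rfl
  rw [pd1, hφ, fderiv_comp p (hd _) (Lc c).differentiableAt, (Lc c).fderiv]
  show fderiv ℝ u (Lc c p) (Lc c (1, 0)) = _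
  rw [Lc_apply, Lc_apply, mul_zero]
  rfl

lemma pd2_comp {u : ℝ × ℝ → ℝ} (hd : Differentiable ℝ u) (c : ℝ) (p : ℝ × ℝ) :
    pd2 (fun q => u (q.1, c * q.2)) p = c * pd2 u (p.1, c * p.2) := by
  have hφ : (fun q : ℝ × ℝ => u (q.1, c * q.2)) = u ∘ (Lc c) := rfl
  rw [pd2, hφ, fderiv_comp p (hd _) (Lc c).differentiableAt, (Lc c).fderiv]
  show fderiv ℝ u (Lc c p) (Lc c (0, 1)) = _
  have h : Lc c (0, 1) = c • ((0:ℝ), (1:ℝ)) := by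
    rw [Lc_apply]; simp
  rw [h, _root_.map_smul, Lc_apply]
  rfl

lemma pd1_differentiable {u : ℝ × ℝ → ℝ} (hu : ContDiff ℝ 2 u) : Differentiable ℝ (pd1 u) :=
  (contDiff_pd hu (1, 0)).differentiable one_ne_zero

lemma pd2_differentiable {u : ℝ × ℝ → ℝ} (hu : ContDiff ℝ 2 u) : Differentiable ℝ (pd2 u) :=
  (contDiff_pd hu (0, 1)).differentiable one_ne_zero

lemma pd11_comp {u : ℝ × ℝ → ℝ} (hu : ContDiff ℝ 2 u) (c : ℝ) (p : ℝ × ℝ) :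
    pd1 (pd1 (fun q => u (q.1, c * q.2))) p = pd1 (pd1 u) (p.1, c * p.2) := by
  have h1 : pd1 (fun q : ℝ × ℝ => u (q.1, c * q.2)) = fun q => pd1 u (q.1, c * q.2) :=
    funext (pd1_comp (hu.differentiable (by norm_num)) c)
  rw [h1]
  exact pd1_comp (pd1_differentiable hu) c p

lemma pd12_comp {u : ℝ × ℝ → ℝ} (hu : ContDiff ℝ 2 u) (c : ℝ) (p : ℝ × ℝ) :
    pd1 (pd2 (fun q => u (q.1, c * q.2))) p = c * pd1 (pd2 u) (p.1, c * p.2) := by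
  have h2 : pd2 (fun q : ℝ × ℝ => u (q.1, c * q.2)) = fun q => c * pd2 u (q.1, c * q.2) :=
    funext (pd2_comp (hu.differentiable (by norm_num)) c)
  have hg : Differentiable ℝ (fun q : ℝ × ℝ => pd2 u (q.1, c * q.2)) := by
    have : (fun q : ℝ × ℝ => pd2 u (q.1, c * q.2)) = (pd2 u) ∘ (Lc c) := rfl
    rw [this]
    exact (pd2_differentiable hu).comp (Lc c).differentiable
  rw [show pd1 (fun q : ℝ × ℝ => pd2 (fun q : ℝ × ℝ => u (q.1, c * q.2)) q)
        = pd1 (fun q : ℝ × ℝ => c * pd2 u (q.1, c * q.2)) by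
      rw [show (fun q : ℝ × ℝ => pd2 (fun q : ℝ × ℝ => u (q.1, c * q.2)) q)
          = pd2 (fun q : ℝ × ℝ => u (q.1, c * q.2)) from rfl, h2]]
  rw [pd1, fderiv_const_mul (hg p) c]
  simp only [ContinuousLinearMap.smul_apply, smul_eq_mul]
  congr 1
  exact pd1_comp (pd2_differentiable hu) c p

lemma pd22_comp {u : ℝ × ℝ → ℝ} (hu : ContDiff ℝ 2 u) (c : ℝ) (p : ℝ × ℝ) :
    pd2 (pd2 (fun q => u (q.1, c * q.2))) p = c^2 * pd2 (pd2 u) (p.1, c * p.2) := by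
  have h2 : pd2 (fun q : ℝ × ℝ => u (q.1, c * q.2)) = fun q => c * pd2 u (q.1, c * q.2) :=
    funext (pd2_comp (hu.differentiable (by norm_num)) c)
  have hg : Differentiable ℝ (fun q : ℝ × ℝ => pd2 u (q.1, c * q.2)) := by
    have : (fun q : ℝ × ℝ => pd2 u (q.1, c * q.2)) = (pd2 u) ∘ (Lc c) := rfl
    rw [this]
    exact (pd2_differentiable hu).comp (Lc c).differentiable
  rw [h2, pd2, fderiv_const_mul (hg p) c]
  simp only [ContinuousLinearMap.smul_apply, smul_eq_mul]
  rw [show fderiv ℝ (fun q : ℝ × ℝ => pd2 u (q.1, c * q.2)) p (0, 1)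
      = pd2 (fun q : ℝ × ℝ => pd2 u (q.1, c * q.2)) p from rfl,
    pd2_comp (pd2_differentiable hu) c p]
  ring

/-- The set whose supremum defines `C3const (0,0) (1,0) (a,β)`. -/
def Sset (a β : ℝ) : Set ℝ :=
  {r : ℝ | ∃ u : ℝ × ℝ → ℝ, ContDiff ℝ 2 u ∧
    u ((0:ℝ),(0:ℝ)) = 0 ∧ u ((1:ℝ),(0:ℝ)) = 0 ∧ u (a, β) = 0 ∧
    (∫ p in convexHull ℝ {((0:ℝ),(0:ℝ)), ((1:ℝ),(0:ℝ)), (a, β)}, (u p)^2) ≠ 0 ∧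
    r = Real.sqrt (∫ p in convexHull ℝ {((0:ℝ),(0:ℝ)), ((1:ℝ),(0:ℝ)), (a, β)}, (u p)^2) /
        Real.sqrt (∫ p in convexHull ℝ {((0:ℝ),(0:ℝ)), ((1:ℝ),(0:ℝ)), (a, β)},
          ((pd1 (pd1 u) p)^2 + 2*(pd1 (pd2 u) p)^2 + (pd2 (pd2 u) p)^2))}

lemma C3_eq (a β : ℝ) : C3const ((0:ℝ),(0:ℝ)) ((1:ℝ),(0:ℝ)) (a, β) = sSup (Sset a β) := rfl

lemma Sset_nonneg (a β : ℝ) : ∀ r ∈ Sset a β, 0 ≤ r := by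
  rintro r ⟨u, -, -, -, -, -, rfl⟩
  positivity

lemma transform (c a β : ℝ) (hc : 0 < c) (u : ℝ × ℝ → ℝ) (hu : ContDiff ℝ 2 u) :
    ((∫ p in convexHull ℝ {((0:ℝ),(0:ℝ)), ((1:ℝ),(0:ℝ)), (a, β)},
        ((fun q : ℝ × ℝ => u (q.1, c * q.2)) p)^2)
      = c⁻¹ * ∫ q in convexHull ℝ {((0:ℝ),(0:ℝ)), ((1:ℝ),(0:ℝ)), (a, c*β)}, (u q)^2) ∧
    ((∫ p in convexHull ℝ {((0:ℝ),(0:ℝ)), ((1:ℝ),(0:ℝ)), (a, β)},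
        ((pd1 (pd1 (fun q : ℝ × ℝ => u (q.1, c * q.2))) p)^2
          + 2*(pd1 (pd2 (fun q : ℝ × ℝ => u (q.1, c * q.2))) p)^2
          + (pd2 (pd2 (fun q : ℝ × ℝ => u (q.1, c * q.2))) p)^2))
      = c⁻¹ * ∫ q in convexHull ℝ {((0:ℝ),(0:ℝ)), ((1:ℝ),(0:ℝ)), (a, c*β)},
          ((pd1 (pd1 u) q)^2 + 2*(c * pd1 (pd2 u) q)^2 + (c^2 * pd2 (pd2 u) q)^2)) := by
  constructor
  · exact cov c hc a β (fun q => (u q)^2) (hu.continuous.pow 2)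
  · have hrw : (fun p : ℝ × ℝ =>
        (pd1 (pd1 (fun q : ℝ × ℝ => u (q.1, c * q.2))) p)^2
          + 2*(pd1 (pd2 (fun q : ℝ × ℝ => u (q.1, c * q.2))) p)^2
          + (pd2 (pd2 (fun q : ℝ × ℝ => u (q.1, c * q.2))) p)^2)
        = fun p : ℝ × ℝ =>
            (fun q : ℝ × ℝ => (pd1 (pd1 u) q)^2 + 2*(c * pd1 (pd2 u) q)^2
              + (c^2 * pd2 (pd2 u) q)^2) (p.1, c * p.2) := by
      funext p
      simp only [pd11_comp hu c p, pd12_comp hu c p, pd22_comp hu c p]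
    rw [hrw]
    exact cov c hc a β
      (fun q : ℝ × ℝ => (pd1 (pd1 u) q)^2 + 2*(c * pd1 (pd2 u) q)^2 + (c^2 * pd2 (pd2 u) q)^2)
      ((((cont_pd11 hu).pow 2).add
        (continuous_const.mul ((continuous_const.mul (cont_pd12 hu)).pow 2))).add
        ((continuous_const.mul (cont_pd22 hu)).pow 2))

lemma mem_Sset (c a β γ : ℝ) (hc : 0 < c) (hγ : γ = c * β)
    (u : ℝ × ℝ → ℝ) (hu : ContDiff ℝ 2 u)
    (h1 : u ((0:ℝ),(0:ℝ)) = 0) (h2 : u ((1:ℝ),(0:ℝ)) = 0) (h3 : u (a, γ) = 0)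
    (hA : (∫ q in convexHull ℝ {((0:ℝ),(0:ℝ)), ((1:ℝ),(0:ℝ)), (a, γ)}, (u q)^2) ≠ 0) :
    Real.sqrt (c⁻¹ * (∫ q in convexHull ℝ {((0:ℝ),(0:ℝ)), ((1:ℝ),(0:ℝ)), (a, γ)}, (u q)^2)) /
      Real.sqrt (c⁻¹ * ∫ q in convexHull ℝ {((0:ℝ),(0:ℝ)), ((1:ℝ),(0:ℝ)), (a, γ)},
        ((pd1 (pd1 u) q)^2 + 2*(c * pd1 (pd2 u) q)^2 + (c^2 * pd2 (pd2 u) q)^2))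
      ∈ Sset a β := by
  subst hγ
  refine ⟨fun q : ℝ × ℝ => u (q.1, c * q.2), cont_v hu c, ?_, ?_, ?_, ?_, ?_⟩
  · show u ((0:ℝ), c * 0) = 0
    rwa [mul_zero]
  · show u ((1:ℝ), c * 0) = 0
    rwa [mul_zero]
  · exact h3
  · rw [(transform c a β hc u hu).1]
    exact mul_ne_zero (inv_ne_zero (ne_of_gt hc)) hA
  · rw [(transform c a β hc u hu).1, (transform c a β hc u hu).2]

lemma ratio_general {A B D s t : ℝ} (hs : 0 < s) (ht : 0 < t) (hA : 0 ≤ A) (hB : 0 ≤ B)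
    (hDle : D ≤ t * B) (hDpos : B ≠ 0 → 0 < D) :
    Real.sqrt (s / t) * (Real.sqrt A / Real.sqrt B)
      ≤ Real.sqrt (s * A) / Real.sqrt D := by
  rcases eq_or_ne B 0 with h0 | h0
  · rw [h0, Real.sqrt_zero, div_zero, mul_zero]
    positivity
  · have hBpos : 0 < B := lt_of_le_of_ne hB (Ne.symm h0)
    have hD : 0 < D := hDpos h0
    have h1 : Real.sqrt (s / t) * (Real.sqrt A / Real.sqrt B)
        = Real.sqrt (s * A) / Real.sqrt (t * B) := by
      rw [Real.sqrt_div hs.le, Real.sqrt_mul hs.le, Real.sqrt_mul ht.le, div_mul_div_comm]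
    rw [h1]
    exact div_le_div_of_nonneg_left (Real.sqrt_nonneg _) (Real.sqrt_pos.2 hD)
      (Real.sqrt_le_sqrt hDle)

lemma integrableOn_hull {f : ℝ × ℝ → ℝ} (hf : Continuous f) (p₁ p₂ p₃ : ℝ × ℝ) :
    IntegrableOn f (convexHull ℝ ({p₁, p₂, p₃} : Set (ℝ × ℝ))) volume :=
  hf.continuousOn.integrableOn_compact (hull_compact p₁ p₂ p₃)

lemma cont_semiInt {u : ℝ × ℝ → ℝ} (hu : ContDiff ℝ 2 u) :
    Continuous (fun q : ℝ × ℝ =>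
      (pd1 (pd1 u) q)^2 + 2*(pd1 (pd2 u) q)^2 + (pd2 (pd2 u) q)^2) :=
  (((cont_pd11 hu).pow 2).add (continuous_const.mul ((cont_pd12 hu).pow 2))).add
    ((cont_pd22 hu).pow 2)

lemma cont_gInt {u : ℝ × ℝ → ℝ} (hu : ContDiff ℝ 2 u) (c : ℝ) :
    Continuous (fun q : ℝ × ℝ =>
      (pd1 (pd1 u) q)^2 + 2*(c * pd1 (pd2 u) q)^2 + (c^2 * pd2 (pd2 u) q)^2) :=
  (((cont_pd11 hu).pow 2).add
    (continuous_const.mul ((continuous_const.mul (cont_pd12 hu)).pow 2))).add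
    ((continuous_const.mul (cont_pd22 hu)).pow 2)

/-- The key comparison: if `u` witnesses a ratio `r` for the triangle with apex `(a,γ)`,
`γ = c·β`, then the rescaled function witnesses a ratio for apex `(a,β)` that is at least
`√(c⁻¹/t) · r`, provided the scaled seminorm integral is bounded by `t·B`. -/
lemma ratio_step (c a β γ : ℝ) (hc : 0 < c) (hγ : γ = c * β)
    (u : ℝ × ℝ → ℝ) (hu : ContDiff ℝ 2 u)
    (h1 : u ((0:ℝ),(0:ℝ)) = 0) (h2 : u ((1:ℝ),(0:ℝ)) = 0) (h3 : u (a, γ) = 0)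
    (hA : (∫ q in convexHull ℝ {((0:ℝ),(0:ℝ)), ((1:ℝ),(0:ℝ)), (a, γ)}, (u q)^2) ≠ 0)
    (t : ℝ) (ht : 0 < t)
    (hle : ∀ q : ℝ × ℝ,
      (pd1 (pd1 u) q)^2 + 2*(c * pd1 (pd2 u) q)^2 + (c^2 * pd2 (pd2 u) q)^2
        ≤ (c * t) * ((pd1 (pd1 u) q)^2 + 2*(pd1 (pd2 u) q)^2 + (pd2 (pd2 u) q)^2))
    (s' : ℝ) (hs' : 0 < s')
    (hge : ∀ q : ℝ × ℝ,
      s' * ((pd1 (pd1 u) q)^2 + 2*(pd1 (pd2 u) q)^2 + (pd2 (pd2 u) q)^2)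
        ≤ (pd1 (pd1 u) q)^2 + 2*(c * pd1 (pd2 u) q)^2 + (c^2 * pd2 (pd2 u) q)^2) :
    ∃ r' ∈ Sset a β,
      Real.sqrt (c⁻¹ / t) *
        (Real.sqrt (∫ q in convexHull ℝ {((0:ℝ),(0:ℝ)), ((1:ℝ),(0:ℝ)), (a, γ)}, (u q)^2) /
         Real.sqrt (∫ q in convexHull ℝ {((0:ℝ),(0:ℝ)), ((1:ℝ),(0:ℝ)), (a, γ)},
           ((pd1 (pd1 u) q)^2 + 2*(pd1 (pd2 u) q)^2 + (pd2 (pd2 u) q)^2))) ≤ r' := by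
  have hs := hull_measurable ((0:ℝ),(0:ℝ)) ((1:ℝ),(0:ℝ)) (a, γ)
  set A := ∫ q in convexHull ℝ {((0:ℝ),(0:ℝ)), ((1:ℝ),(0:ℝ)), (a, γ)}, (u q)^2 with hAdef
  set B := ∫ q in convexHull ℝ {((0:ℝ),(0:ℝ)), ((1:ℝ),(0:ℝ)), (a, γ)},
      ((pd1 (pd1 u) q)^2 + 2*(pd1 (pd2 u) q)^2 + (pd2 (pd2 u) q)^2) with hBdef
  set G := ∫ q in convexHull ℝ {((0:ℝ),(0:ℝ)), ((1:ℝ),(0:ℝ)), (a, γ)},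
      ((pd1 (pd1 u) q)^2 + 2*(c * pd1 (pd2 u) q)^2 + (c^2 * pd2 (pd2 u) q)^2) with hGdef
  have hIsemi := integrableOn_hull (cont_semiInt hu) ((0:ℝ),(0:ℝ)) ((1:ℝ),(0:ℝ)) (a, γ)
  have hIg := integrableOn_hull (cont_gInt hu c) ((0:ℝ),(0:ℝ)) ((1:ℝ),(0:ℝ)) (a, γ)
  have hA0 : 0 ≤ A := setIntegral_nonneg hs (fun x _ => by positivity)
  have hB0 : 0 ≤ B := setIntegral_nonneg hs (fun x _ => by positivity)
  have hGle : G ≤ (c * t) * B := by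
    rw [hGdef, hBdef, ← integral_const_mul]
    exact setIntegral_mono_on hIg (hIsemi.const_mul _) hs (fun x _ => hle x)
  have hGge : s' * B ≤ G := by
    rw [hGdef, hBdef, ← integral_const_mul]
    exact setIntegral_mono_on (hIsemi.const_mul _) hIg hs (fun x _ => hge x)
  have hDle : c⁻¹ * G ≤ t * B := by
    have := mul_le_mul_of_nonneg_left hGle (inv_nonneg.2 hc.le)
    calc c⁻¹ * G ≤ c⁻¹ * ((c * t) * B) := this
      _ = t * B := by field_simp
  have hDpos : B ≠ 0 → 0 < c⁻¹ * G := by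
    intro hBne
    have hBpos : 0 < B := lt_of_le_of_ne hB0 (Ne.symm hBne)
    have : (0:ℝ) < s' * B := by positivity
    have hGpos : 0 < G := lt_of_lt_of_le this hGge
    positivity
  refine ⟨_, mem_Sset c a β γ hc hγ u hu h1 h2 h3 hA, ?_⟩
  have := ratio_general (inv_pos.2 hc) ht hA0 hB0 hDle hDpos
  exact this

theorem C3_monotone (a b η : ℝ) (hb : 0 < b) (hη0 : 0 < η) (hη1 : η ≤ 1) :
    C3const ((0:ℝ), (0:ℝ)) ((1:ℝ), (0:ℝ)) (a, η*b)
      ≤ C3const ((0:ℝ), (0:ℝ)) ((1:ℝ), (0:ℝ)) (a, b) := by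
  rw [C3_eq, C3_eq]
  by_cases hbdd : BddAbove (Sset a b)
  · refine Real.sSup_le ?_ (Real.sSup_nonneg (Sset_nonneg a b))
    rintro r ⟨u, hu, h1, h2, h3, hA, rfl⟩
    have hle1 : ∀ q : ℝ × ℝ,
        (pd1 (pd1 u) q)^2 + 2*(η * pd1 (pd2 u) q)^2 + (η^2 * pd2 (pd2 u) q)^2
          ≤ (η * η⁻¹) * ((pd1 (pd1 u) q)^2 + 2*(pd1 (pd2 u) q)^2 + (pd2 (pd2 u) q)^2) := by
      intro q
      rw [mul_inv_cancel₀ (ne_of_gt hη0), one_mul]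
      have hη2 : η^2 ≤ 1 := by nlinarith
      have hη4 : η^4 ≤ 1 := by nlinarith
      nlinarith [mul_le_mul_of_nonneg_right hη2 (sq_nonneg (pd1 (pd2 u) q)),
        mul_le_mul_of_nonneg_right hη4 (sq_nonneg (pd2 (pd2 u) q))]
    have hge1 : ∀ q : ℝ × ℝ,
        η^4 * ((pd1 (pd1 u) q)^2 + 2*(pd1 (pd2 u) q)^2 + (pd2 (pd2 u) q)^2)
          ≤ (pd1 (pd1 u) q)^2 + 2*(η * pd1 (pd2 u) q)^2 + (η^2 * pd2 (pd2 u) q)^2 := by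
      intro q
      have hη2 : η^2 ≤ 1 := by nlinarith
      have hη4 : η^4 ≤ 1 := by nlinarith
      have hη42 : η^4 ≤ η^2 := by nlinarith
      nlinarith [mul_le_mul_of_nonneg_right hη4 (sq_nonneg (pd1 (pd1 u) q)),
        mul_le_mul_of_nonneg_right hη42 (sq_nonneg (pd1 (pd2 u) q))]
    obtain ⟨r', hr'mem, hr'⟩ := ratio_step η a b (η*b) hη0 rfl u hu h1 h2 h3 hA η⁻¹
      (inv_pos.2 hη0) hle1 (η^4) (by positivity) hge1
    have hfac : Real.sqrt (η⁻¹ / η⁻¹) = 1 := by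
      rw [div_self (inv_ne_zero (ne_of_gt hη0)), Real.sqrt_one]
    rw [hfac, one_mul] at hr'
    exact le_trans hr' (le_csSup hbdd hr'mem)
  · rw [Real.sSup_of_not_bddAbove hbdd]
    have hbdd1 : ¬ BddAbove (Sset a (η*b)) := by
      intro hbdd1
      obtain ⟨M, hM⟩ := hbdd1
      apply hbdd
      refine ⟨M / η^2, ?_⟩
      rintro r ⟨u, hu, h1, h2, h3, hA, rfl⟩
      have hcb : b = η⁻¹ * (η * b) := by field_simp
      have h1le : (1:ℝ) ≤ η⁻¹ := one_le_inv_iff₀.2 ⟨hη0, hη1⟩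
      have hle2 : ∀ q : ℝ × ℝ,
          (pd1 (pd1 u) q)^2 + 2*(η⁻¹ * pd1 (pd2 u) q)^2 + ((η⁻¹)^2 * pd2 (pd2 u) q)^2
            ≤ (η⁻¹ * η⁻¹^3) * ((pd1 (pd1 u) q)^2 + 2*(pd1 (pd2 u) q)^2 + (pd2 (pd2 u) q)^2) := by
        intro q
        have hc2 : 1 ≤ η⁻¹^2 := by nlinarith
        have hc4 : 1 ≤ η⁻¹^4 := by nlinarith
        have hc24 : η⁻¹^2 ≤ η⁻¹^4 := by nlinarith
        nlinarith [mul_le_mul_of_nonneg_right hc4 (sq_nonneg (pd1 (pd1 u) q)),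
          mul_le_mul_of_nonneg_right hc24 (sq_nonneg (pd1 (pd2 u) q))]
      have hge2 : ∀ q : ℝ × ℝ,
          1 * ((pd1 (pd1 u) q)^2 + 2*(pd1 (pd2 u) q)^2 + (pd2 (pd2 u) q)^2)
            ≤ (pd1 (pd1 u) q)^2 + 2*(η⁻¹ * pd1 (pd2 u) q)^2 + ((η⁻¹)^2 * pd2 (pd2 u) q)^2 := by
        intro q
        have hc2 : 1 ≤ η⁻¹^2 := by nlinarith
        have hc4 : 1 ≤ η⁻¹^4 := by nlinarith
        nlinarith [mul_le_mul_of_nonneg_right hc2 (sq_nonneg (pd1 (pd2 u) q)),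
          mul_le_mul_of_nonneg_right hc4 (sq_nonneg (pd2 (pd2 u) q))]
      obtain ⟨r', hr'mem, hr'⟩ := ratio_step η⁻¹ a (η*b) b (inv_pos.2 hη0) hcb u hu h1 h2 h3 hA
        (η⁻¹^3) (by positivity) hle2 1 one_pos hge2
      have hfac : Real.sqrt ((η⁻¹)⁻¹ / η⁻¹^3) = η^2 := by
        rw [inv_inv]
        have h4 : η / η⁻¹^3 = (η^2)^2 := by field_simp
        rw [h4, Real.sqrt_sq (by positivity)]
      rw [hfac] at hr'
      have hr'M : r' ≤ M := hM hr'mem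
      have hη2 : (0:ℝ) < η^2 := by positivity
      rw [le_div_iff₀ hη2]
      calc (Real.sqrt (∫ p in convexHull ℝ {((0:ℝ),(0:ℝ)), ((1:ℝ),(0:ℝ)), (a, b)}, (u p)^2) /
            Real.sqrt (∫ p in convexHull ℝ {((0:ℝ),(0:ℝ)), ((1:ℝ),(0:ℝ)), (a, b)},
              ((pd1 (pd1 u) p)^2 + 2*(pd1 (pd2 u) p)^2 + (pd2 (pd2 u) p)^2))) * η^2
          = η^2 * (Real.sqrt (∫ p in convexHull ℝ {((0:ℝ),(0:ℝ)), ((1:ℝ),(0:ℝ)), (a, b)}, (u p)^2) /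
            Real.sqrt (∫ p in convexHull ℝ {((0:ℝ),(0:ℝ)), ((1:ℝ),(0:ℝ)), (a, b)},
              ((pd1 (pd1 u) p)^2 + 2*(pd1 (pd2 u) p)^2 + (pd2 (pd2 u) p)^2))) := by ring
        _ ≤ r' := hr'
        _ ≤ M := hr'M
    rw [Real.sSup_of_not_bddAbove hbdd1]
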